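/- Let $d_0,\dots,d_m$ be positive integers and $n\geq m$. For $k=0,\dots,m$ let $\Delta_k^\vee = \{p=(p_0,\dots,p_m)\in\mathbb{R}_{\leq 0}^{m+1} : p_k=0,\ \sum_{i=0}^m d_i p_i \geq -1\}$, regarded as an $m$-dimensional region with Lebesgue measure via the coordinates $(p_i)_{i\neq k}$, with weight $W(p)=(1+\sum_{i=0}^m d_i p_i)^{n-m}$. Then $\sum_{k=0}^m \int_{\Delta_k^\vee} W(p)\,dp = \frac{d_0+\cdots+d_m}{d_0\cdots d_m}\cdot\frac{(n-m)!}{n!}$. -/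

import Mathlib

open MeasureTheory Set
open scoped ENNReal


lemma ofReal_max_zero (a : ℝ) : ENNReal.ofReal (max a 0) = ENNReal.ofReal a := by
  rcases le_or_gt 0 a with h | h
  · rw [max_eq_left h]
  · rw [max_eq_right h.le, ENNReal.ofReal_zero, ENNReal.ofReal_of_nonpos h.le]

lemma measSet {ι : Type*} [Fintype ι] (c : ι → ℝ) :
    MeasurableSet {q : ι → ℝ | (∀ i, q i ≤ 0) ∧ -1 ≤ ∑ i, c i * q i} := by
  rw [Set.setOf_and]
  apply MeasurableSet.inter
  · have : {q : ι → ℝ | ∀ i, q i ≤ 0} = ⋂ i, {q : ι → ℝ | q i ≤ 0} := by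
      ext q; simp
    rw [this]
    exact MeasurableSet.iInter fun i =>
      measurableSet_le (measurable_pi_apply i) measurable_const
  · exact measurableSet_le measurable_const
      (Finset.measurable_sum _ fun i _ => (measurable_pi_apply i).const_mul _)


lemma inner1D (a : ℝ) {c : ℝ} (hc : 0 < c) (r : ℕ) :
    ∫⁻ t in {t : ℝ | t ≤ 0 ∧ 0 ≤ a + c * t}, (ENNReal.ofReal (a + c * t)) ^ r
      = ENNReal.ofReal (max a 0 ^ (r + 1) / (c * (r + 1))) := by
  rcases lt_or_ge a 0 with ha | ha
  · have hempty : {t : ℝ | t ≤ 0 ∧ 0 ≤ a + c * t} = ∅ := by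
      ext t
      simp only [mem_setOf_eq, mem_empty_iff_false, iff_false, not_and, not_le]
      intro ht
      nlinarith
    rw [hempty, Measure.restrict_empty, lintegral_zero_measure,
      max_eq_right ha.le, zero_pow (Nat.succ_ne_zero r)]
    simp
  · have hset : {t : ℝ | t ≤ 0 ∧ 0 ≤ a + c * t} = Icc (-(a / c)) 0 := by
      ext t
      simp only [mem_setOf_eq, mem_Icc]
      constructor
      · rintro ⟨h1, h2⟩
        refine ⟨?_, h1⟩
        rw [neg_le]
        rw [le_div_iff₀ hc]
        nlinarith
      · rintro ⟨h1, h2⟩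
        refine ⟨h2, ?_⟩
        rw [neg_le, le_div_iff₀ hc] at h1
        nlinarith
    rw [hset]
    have hcong : ∀ t ∈ Icc (-(a / c)) (0:ℝ),
        (ENNReal.ofReal (a + c * t)) ^ r = ENNReal.ofReal ((a + c * t) ^ r) := by
      intro t ht
      rw [ENNReal.ofReal_pow]
      rcases ht with ⟨h1, _⟩
      rw [neg_le, le_div_iff₀ hc] at h1
      nlinarith
    rw [setLIntegral_congr_fun measurableSet_Icc hcong]
    have hint : IntegrableOn (fun t => (a + c * t) ^ r) (Icc (-(a / c)) 0) := by
      apply Continuous.integrableOn_Icc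
      continuity
    have hnn : 0 ≤ᵐ[volume.restrict (Icc (-(a/c)) (0:ℝ))] fun t => (a + c * t) ^ r := by
      refine ae_restrict_of_forall_mem measurableSet_Icc ?_
      intro t ht
      rcases ht with ⟨h1, _⟩
      rw [neg_le, le_div_iff₀ hc] at h1
      have : 0 ≤ a + c * t := by nlinarith
      positivity
    rw [← ofReal_integral_eq_lintegral_ofReal hint hnn]
    congr 1
    have hle : -(a / c) ≤ (0:ℝ) := by rw [neg_nonpos]; positivity
    rw [integral_Icc_eq_integral_Ioc, ← intervalIntegral.integral_of_le hle]
    have : ∀ t : ℝ, (a + c * t) ^ r = (fun x : ℝ => x ^ r) (c * t + a) := by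
      intro t; ring_nf
    simp_rw [this]
    rw [intervalIntegral.integral_comp_mul_add (fun x : ℝ => x ^ r) hc.ne' a]
    have h1 : c * -(a / c) + a = 0 := by field_simp; ring
    have h2 : c * 0 + a = a := by ring
    rw [h1, h2, integral_pow, max_eq_left ha]
    rw [zero_pow (Nat.succ_ne_zero r)]
    have hr : ((r:ℝ)+1) ≠ 0 := by positivity
    rw [smul_eq_mul, sub_zero]
    field_simp

lemma keyL (m : ℕ) : ∀ (r : ℕ) (c : Fin m → ℝ), (∀ i, 0 < c i) →
    ∫⁻ q : Fin m → ℝ in {q | (∀ i, q i ≤ 0) ∧ -1 ≤ ∑ i, c i * q i},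
      (ENNReal.ofReal (1 + ∑ i, c i * q i)) ^ r
    = ENNReal.ofReal ((r.factorial : ℝ) / ((r + m).factorial : ℝ) / ∏ i, c i) := by
  induction m with
  | zero =>
    intro r c hc
    have hU : {q : Fin 0 → ℝ | (∀ i, q i ≤ 0) ∧ -1 ≤ ∑ i, c i * q i} = Set.univ := by
      ext q; simp
    rw [hU, Measure.restrict_univ]
    simp only [Finset.univ_eq_empty, Finset.sum_empty, Finset.prod_empty, add_zero]
    rw [lintegral_const]
    have hvol : (volume : Measure (Fin 0 → ℝ)) Set.univ = 1 := by
      rw [volume_pi, Measure.pi_univ]; simp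
    rw [hvol, ENNReal.ofReal_one, one_pow, one_mul, div_one, div_self, ENNReal.ofReal_one]
    exact_mod_cast r.factorial_ne_zero
  | succ m ih =>
    intro r c hc
    have hc0 : (0:ℝ) < c 0 := hc 0
    -- Step 1: transfer to ℝ × (Fin m → ℝ)
    have hmp := (MeasureTheory.volume_preserving_piFinSuccAbove (fun _ : Fin (m+1) => ℝ) 0).symm
    set e := MeasurableEquiv.piFinSuccAbove (fun _ : Fin (m+1) => ℝ) 0 with he
    set T : Set (ℝ × (Fin m → ℝ)) :=
      {z | z.1 ≤ 0 ∧ (∀ i, z.2 i ≤ 0) ∧ -1 ≤ c 0 * z.1 + ∑ i, c i.succ * z.2 i} with hTdef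
    set G : ℝ × (Fin m → ℝ) → ℝ≥0∞ :=
      fun z => (ENNReal.ofReal (1 + (c 0 * z.1 + ∑ i, c i.succ * z.2 i))) ^ r with hGdef
    have hTmeas : MeasurableSet T := by
      rw [hTdef]
      simp only [Set.setOf_and]
      refine (measurableSet_le measurable_fst measurable_const).inter
        (MeasurableSet.inter ?_ ?_)
      · have : {z : ℝ × (Fin m → ℝ) | ∀ i, z.2 i ≤ 0}
            = ⋂ i, {z : ℝ × (Fin m → ℝ) | z.2 i ≤ 0} := by ext z; simp
        rw [this]
        exact MeasurableSet.iInter fun i =>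
          measurableSet_le (measurable_snd.eval) measurable_const
      · exact measurableSet_le measurable_const
          ((measurable_fst.const_mul _).add (Finset.measurable_sum _ fun i _ =>
            (measurable_snd.eval).const_mul _))
    have hGmeas : Measurable G := by
      apply Measurable.pow_const
      apply ENNReal.measurable_ofReal.comp
      exact measurable_const.add ((measurable_fst.const_mul _).add
        (Finset.measurable_sum _ fun i _ =>
          (measurable_snd.eval).const_mul _))
    have step1 :
        ∫⁻ q : Fin (m+1) → ℝ in {q | (∀ i, q i ≤ 0) ∧ -1 ≤ ∑ i, c i * q i},
          (ENNReal.ofReal (1 + ∑ i, c i * q i)) ^ r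
        = ∫⁻ z : ℝ × (Fin m → ℝ) in T, G z := by
      rw [← hmp.setLIntegral_comp_preimage_emb e.symm.measurableEmbedding]
      have hpre : e.symm ⁻¹' {q : Fin (m+1) → ℝ | (∀ i, q i ≤ 0) ∧ -1 ≤ ∑ i, c i * q i} = T := by
        ext ⟨t, y⟩
        simp [he, hTdef, MeasurableEquiv.piFinSuccAbove_symm_apply, Fin.insertNth_zero,
          Fin.forall_fin_succ, Fin.sum_univ_succ, and_assoc]
      rw [hpre]
      apply setLIntegral_congr_fun hTmeas
      rintro ⟨t, y⟩ _
      simp [he, hGdef, MeasurableEquiv.piFinSuccAbove_symm_apply, Fin.insertNth_zero,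
        Fin.sum_univ_succ]
    rw [step1]
    -- Step 2: Tonelli
    rw [← lintegral_indicator hTmeas]
    rw [Measure.volume_eq_prod]
    rw [lintegral_prod_symm' _ (hGmeas.indicator hTmeas)]
    -- Step 3: inner integral
    have hK : (ENNReal.ofReal (c 0 * (r+1)))⁻¹ ≠ ⊤ := by
      rw [ENNReal.inv_ne_top, Ne, ENNReal.ofReal_eq_zero, not_le]
      exact mul_pos hc0 (by positivity)
    have step3 : ∀ y : Fin m → ℝ,
        ∫⁻ t : ℝ, T.indicator G (t, y)
        = Set.indicator {y : Fin m → ℝ | ∀ i, y i ≤ 0}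
            (fun y => (ENNReal.ofReal (1 + ∑ i, c i.succ * y i)) ^ (r+1)) y
          * (ENNReal.ofReal (c 0 * (r+1)))⁻¹ := by
      intro y
      by_cases hy : ∀ i, y i ≤ 0
      · set a : ℝ := 1 + ∑ i, c i.succ * y i with hadef
        have heq : (fun t => T.indicator G (t, y))
            = {t : ℝ | t ≤ 0 ∧ 0 ≤ a + c 0 * t}.indicator
                (fun t => (ENNReal.ofReal (a + c 0 * t)) ^ r) := by
          funext t
          rw [Set.indicator_apply, Set.indicator_apply]
          have hiff : ((t, y) ∈ T) ↔ (t ∈ {t : ℝ | t ≤ 0 ∧ 0 ≤ a + c 0 * t}) := by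
            simp only [hTdef, Set.mem_setOf_eq, hadef]
            constructor
            · rintro ⟨h1, _, h3⟩
              exact ⟨h1, by linarith⟩
            · rintro ⟨h1, h2⟩
              exact ⟨h1, hy, by linarith⟩
          rw [if_congr hiff rfl rfl]
          congr 1
          simp only [hGdef, hadef]
          ring_nf
        rw [heq]
        have hUmeas : MeasurableSet {t : ℝ | t ≤ 0 ∧ 0 ≤ a + c 0 * t} := by
          simp only [Set.setOf_and]
          exact (measurableSet_le measurable_id measurable_const).inter
            (measurableSet_le measurable_const
              (measurable_const.add (measurable_id.const_mul _)))
        rw [lintegral_indicator hUmeas, inner1D a hc0 r]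
        rw [Set.indicator_of_mem (by exact hy)]
        rw [ENNReal.ofReal_div_of_pos (mul_pos hc0 (by positivity)), ENNReal.ofReal_pow (le_max_right a 0),
          ofReal_max_zero, div_eq_mul_inv]
      · have hz : ∀ t : ℝ, T.indicator G (t, y) = 0 := by
          intro t
          apply Set.indicator_of_notMem
          simp only [hTdef, Set.mem_setOf_eq]
          tauto
        simp only [hz, lintegral_zero]
        rw [Set.indicator_of_notMem (by exact hy), zero_mul]
    simp_rw [step3]
    -- Step 4: pull out the constant and change the indicator set
    rw [lintegral_mul_const' _ _ hK]
    set S0 : Set (Fin m → ℝ) := {y | ∀ i, y i ≤ 0} with hS0def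
    set Sf : Set (Fin m → ℝ) := {y | (∀ i, y i ≤ 0) ∧ -1 ≤ ∑ i, c i.succ * y i} with hSfdef
    have hind : S0.indicator (fun y => (ENNReal.ofReal (1 + ∑ i, c i.succ * y i)) ^ (r+1))
        = Sf.indicator (fun y => (ENNReal.ofReal (1 + ∑ i, c i.succ * y i)) ^ (r+1)) := by
      funext y
      by_cases hy : ∀ i, y i ≤ 0
      · by_cases hs : -1 ≤ ∑ i, c i.succ * y i
        · rw [Set.indicator_of_mem (by exact hy), Set.indicator_of_mem (show y ∈ Sf from ⟨hy, hs⟩)]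
        · rw [Set.indicator_of_mem (by exact hy),
            Set.indicator_of_notMem (show y ∉ Sf from fun h => hs h.2)]
          have : (1 : ℝ) + ∑ i, c i.succ * y i ≤ 0 := by push_neg at hs; linarith
          rw [ENNReal.ofReal_of_nonpos this, zero_pow (Nat.succ_ne_zero r)]
      · rw [Set.indicator_of_notMem (by exact hy),
          Set.indicator_of_notMem (show y ∉ Sf from fun h => hy h.1)]
    rw [hind, lintegral_indicator (measSet _)]
    rw [ih (r+1) (fun i => c i.succ) (fun i => hc i.succ)]
    -- Step 5: arithmetic
    rw [← ENNReal.ofReal_inv_of_pos (mul_pos hc0 (by positivity)), ← ENNReal.ofReal_mul (div_nonneg (div_nonneg (Nat.cast_nonneg _) (Nat.cast_nonneg _)) (Finset.prod_pos fun i _ => hc i.succ).le)]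
    congr 1
    have h1 : ((r+1+m).factorial : ℝ) = ((r+(m+1)).factorial : ℝ) := by
      rw [show r+1+m = r+(m+1) from by omega]
    have h2 : (∏ i, c i) = c 0 * ∏ i : Fin m, c i.succ := Fin.prod_univ_succ c
    have hprodpos : (0:ℝ) < ∏ i : Fin m, c i.succ := Finset.prod_pos fun i _ => hc i.succ
    rw [h1, h2]
    push_cast [Nat.factorial_succ]
    have hfac : ((r+(m+1)).factorial : ℝ) ≠ 0 := Nat.cast_ne_zero.mpr (Nat.factorial_ne_zero _)
    field_simp

lemma perk (m n : ℕ) (hmn : m ≤ n) (d : Fin (m+1) → ℕ) (hd : ∀ i, 0 < d i) (k : Fin (m+1)) :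
    ∫ q : ({i : Fin (m + 1) // i ≠ k} → ℝ) in
        {q | (∀ i, q i ≤ 0) ∧ -1 ≤ ∑ i, (d i.1 : ℝ) * q i},
        (1 + ∑ i, (d i.1 : ℝ) * q i) ^ (n - m)
    = ((n - m).factorial : ℝ) / (n.factorial : ℝ)
        / ∏ i : {i : Fin (m + 1) // i ≠ k}, (d i.1 : ℝ) := by
  set ι := {i : Fin (m + 1) // i ≠ k}
  set c : ι → ℝ := fun i => (d i.1 : ℝ) with hcdef
  have hc : ∀ i, 0 < c i := fun i => Nat.cast_pos.mpr (hd i.1)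
  set S : Set (ι → ℝ) := {q | (∀ i, q i ≤ 0) ∧ -1 ≤ ∑ i, c i * q i} with hSdef
  have hS : MeasurableSet S := measSet c
  have hmeas : Measurable fun q : ι → ℝ => (1 + ∑ i, c i * q i) ^ (n - m) :=
    (measurable_const.add (Finset.measurable_sum _ fun i _ =>
      (measurable_pi_apply i).const_mul _)).pow_const _
  rw [integral_eq_lintegral_of_nonneg_ae
    (ae_restrict_of_forall_mem hS fun q hq => pow_nonneg (by have h2 := hq.2; linarith) _)
    hmeas.aestronglyMeasurable]
  have hcong : ∀ q ∈ S, ENNReal.ofReal ((1 + ∑ i, c i * q i) ^ (n - m))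
      = (ENNReal.ofReal (1 + ∑ i, c i * q i)) ^ (n - m) := by
    intro q hq
    exact ENNReal.ofReal_pow (by have := hq.2; linarith) _
  rw [setLIntegral_congr_fun hS hcong]
  -- transport along an equivalence Fin m ≃ ι
  have hcard : Fintype.card ι = m := by
    simp [ι, Fintype.card_subtype_compl]
  have e : Fin m ≃ ι := (Fintype.equivFinOfCardEq hcard).symm
  set φ := MeasurableEquiv.piCongrLeft (fun _ : ι => ℝ) e with hφdef
  have hmp : MeasurePreserving φ volume volume :=
    volume_measurePreserving_piCongrLeft (fun _ : ι => ℝ) e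
  rw [← hmp.setLIntegral_comp_preimage_emb φ.measurableEmbedding]
  have hφap : ∀ (x : Fin m → ℝ) (j : Fin m), φ x (e j) = x j := by
    intro x j
    simp [hφdef, MeasurableEquiv.coe_piCongrLeft, Equiv.piCongrLeft_apply_apply]
  have hsum : ∀ x : Fin m → ℝ, ∑ i, c i * φ x i = ∑ j, c (e j) * x j := by
    intro x
    rw [← Equiv.sum_comp e (fun i : ι => c i * φ x i)]
    exact Finset.sum_congr rfl fun j _ => by rw [hφap]
  have hall : ∀ x : Fin m → ℝ, (∀ i, φ x i ≤ 0) ↔ ∀ j, x j ≤ 0 := by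
    intro x
    constructor
    · intro h j; rw [← hφap x j]; exact h (e j)
    · intro h i
      rcases e.surjective i with ⟨j, rfl⟩
      rw [hφap]; exact h j
  have hpre : φ ⁻¹' S = {x : Fin m → ℝ | (∀ j, x j ≤ 0) ∧ -1 ≤ ∑ j, c (e j) * x j} := by
    ext x
    simp only [Set.mem_preimage, hSdef, Set.mem_setOf_eq, hsum, hall]
  rw [hpre]
  have := keyL m (n - m) (fun j => c (e j)) (fun j => hc (e j))
  have hcong2 : ∀ x ∈ {x : Fin m → ℝ | (∀ j, x j ≤ 0) ∧ -1 ≤ ∑ j, c (e j) * x j},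
      (ENNReal.ofReal (1 + ∑ i, c i * φ x i)) ^ (n - m)
      = (ENNReal.ofReal (1 + ∑ j, c (e j) * x j)) ^ (n - m) := by
    intro x _
    rw [hsum]
  rw [setLIntegral_congr_fun (measSet _) hcong2, this]
  rw [Nat.sub_add_cancel hmn]
  rw [Equiv.prod_comp e (fun i : ι => c i)]
  exact ENNReal.toReal_ofReal (div_nonneg (div_nonneg (Nat.cast_nonneg _) (Nat.cast_nonneg _))
    (Finset.prod_nonneg fun i _ => Nat.cast_nonneg _))


/-- The total weighted mass of the simplicial complex `⋃ₖ Δₖ^∨`,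
where `Δₖ^∨ = {p ∈ ℝ_{≤0}^{m+1} : p_k = 0, ∑ dᵢpᵢ ≥ -1}` carries the weight
`W(p) = (1 + ∑ dᵢ pᵢ)^{n-m}` and Lebesgue measure in the coordinates `(pᵢ)_{i ≠ k}`,
equals `(d₀+⋯+d_m)/(d₀⋯d_m) · (n-m)!/n!`. Since `p_k = 0`, the region and weight are
expressed in terms of the remaining coordinates `(pᵢ)_{i ≠ k}`. -/
theorem total_weighted_mass_dual_complex (m n : ℕ) (hmn : m ≤ n)
    (d : Fin (m + 1) → ℕ) (hd : ∀ i, 0 < d i) :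
    ∑ k : Fin (m + 1),
      (∫ q : ({i : Fin (m + 1) // i ≠ k} → ℝ) in
        {q | (∀ i, q i ≤ 0) ∧ -1 ≤ ∑ i, (d i.1 : ℝ) * q i},
        (1 + ∑ i, (d i.1 : ℝ) * q i) ^ (n - m))
    = (∑ i, (d i : ℝ)) / (∏ i, (d i : ℝ)) * ((n - m).factorial : ℝ) / (n.factorial : ℝ) := by
  have hperk := fun k => perk m n hmn d hd k
  rw [Finset.sum_congr rfl fun k _ => hperk k]
  have hP : (0 : ℝ) < ∏ i, (d i : ℝ) :=
    Finset.prod_pos fun i _ => Nat.cast_pos.mpr (hd i)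
  have hQ : ∀ k : Fin (m + 1),
      (∏ i : {i : Fin (m + 1) // i ≠ k}, (d i.1 : ℝ)) = (∏ i, (d i : ℝ)) / (d k : ℝ) := by
    intro k
    have h1 : ∏ i : {i : Fin (m + 1) // i ≠ k}, (d i.1 : ℝ)
        = ∏ i ∈ Finset.univ.erase k, (d i : ℝ) := by
      rw [← Finset.prod_subtype (Finset.univ.erase k)
        (fun x => by simp [Finset.mem_erase]) (fun i => (d i : ℝ))]
    rw [h1, eq_div_iff (by exact_mod_cast (hd k).ne'), mul_comm]
    exact Finset.mul_prod_erase Finset.univ (fun i => (d i : ℝ)) (Finset.mem_univ k)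
  have hterm : ∀ k : Fin (m + 1),
      ((n - m).factorial : ℝ) / (n.factorial : ℝ) / ∏ i : {i : Fin (m + 1) // i ≠ k}, (d i.1 : ℝ)
      = ((n - m).factorial : ℝ) / (n.factorial : ℝ) * ((d k : ℝ) / ∏ i, (d i : ℝ)) := by
    intro k
    rw [hQ k]
    rw [div_div_eq_mul_div]
    exact mul_div_assoc _ _ _
  simp_rw [hterm]
  rw [← Finset.mul_sum, ← Finset.sum_div]
  ring
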